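/- arXiv:1907.05064 — 10 statements merged into one kernel-verified Lean document; each statement's English description precedes it below -/
import Mathlib

section
/- Define c : ℕ → ℕ by c(1) = 0, c(2n) = 2·c(n), and c(2n+1) = c(n+1) + c(n) + 1 for n ≥ 1. Then for all m ≥ 1 and all s ≥ 0, c(m+s) + c(m) + s ≥ c(2m+s). -/
/-!
Writing the inequality symmetrically as `c (a + b) + a ≤ c a + c b + b` for `a ≤ b`, it is proved by
strong induction on `b`. Splitting `a` and `b` by parity, the recurrence expresses `c (a + b)`, `c a`
and `c b` through values at about half the size, and the required bound follows by adding one or two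
instances of the inequality for those halves. The case `a = 1` is treated separately, since the odd
recurrence is not available at `1 = 2 * 0 + 1`.
-/

structure MinCollessRecurrence (c : ℕ → ℕ) : Prop where
  map_one : c 1 = 0
  map_two_mul : ∀ n : ℕ, 1 ≤ n → c (2 * n) = 2 * c n
  map_two_mul_add_one : ∀ n : ℕ, 1 ≤ n → c (2 * n + 1) = c (n + 1) + c n + 1

namespace MinCollessRecurrence

variable {c : ℕ → ℕ}

theorem map_succ_add_one_le (hc : MinCollessRecurrence c) {n : ℕ} (hn : 1 ≤ n) :
    c (n + 1) + 1 ≤ c n + n := by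
  induction n using Nat.strong_induction_on with
  | _ n ih =>
  obtain ⟨k, rfl | rfl⟩ := Nat.even_or_odd' n
  · have hk := ih k (by omega) (by omega)
    rw [hc.map_two_mul_add_one k (by omega), hc.map_two_mul k (by omega)]
    omega
  · rcases Nat.eq_zero_or_pos k with rfl | hk
    · show c (2 * 1) + 1 ≤ c 1 + 1
      rw [hc.map_two_mul 1 le_rfl, hc.map_one]
    · have hk' := ih k (by omega) hk
      rw [show 2 * k + 1 + 1 = 2 * (k + 1) by ring, hc.map_two_mul (k + 1) (by omega),
        hc.map_two_mul_add_one k hk]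
      omega

theorem even_add_even_step (hc : MinCollessRecurrence c) {x y : ℕ} (hx : 1 ≤ x) (hy : 1 ≤ y)
    (h : c (x + y) + x ≤ c x + c y + y) :
    c (2 * x + 2 * y) + 2 * x ≤ c (2 * x) + c (2 * y) + 2 * y := by
  rw [← mul_add, hc.map_two_mul _ (by omega), hc.map_two_mul x hx, hc.map_two_mul y hy]
  omega

theorem even_add_odd_step (hc : MinCollessRecurrence c) {x y : ℕ} (hx : 1 ≤ x) (hy : 1 ≤ y)
    (h : c (x + y) + x ≤ c x + c y + y) (h' : c (x + (y + 1)) + x ≤ c x + c (y + 1) + (y + 1)) :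
    c (2 * x + (2 * y + 1)) + 2 * x ≤ c (2 * x) + c (2 * y + 1) + (2 * y + 1) := by
  rw [show 2 * x + (2 * y + 1) = 2 * (x + y) + 1 by ring, hc.map_two_mul_add_one _ (by omega),
    hc.map_two_mul x hx, hc.map_two_mul_add_one y hy, show x + y + 1 = x + (y + 1) by ring]
  omega

theorem odd_add_even_step (hc : MinCollessRecurrence c) {x y : ℕ} (hx : 1 ≤ x) (hy : 1 ≤ y)
    (h : c (x + y) + x ≤ c x + c y + y) (h' : c (x + 1 + y) + (x + 1) ≤ c (x + 1) + c y + y) :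
    c (2 * x + 1 + 2 * y) + (2 * x + 1) ≤ c (2 * x + 1) + c (2 * y) + 2 * y := by
  rw [show 2 * x + 1 + 2 * y = 2 * (x + y) + 1 by ring, hc.map_two_mul_add_one _ (by omega),
    hc.map_two_mul_add_one x hx, hc.map_two_mul y hy, show x + y + 1 = x + 1 + y by ring]
  omega

theorem odd_add_odd_step (hc : MinCollessRecurrence c) {x y : ℕ} (hx : 1 ≤ x) (hy : 1 ≤ y)
    (h : c (x + 1 + y) + (x + 1) ≤ c (x + 1) + c y + y)
    (h' : c (x + (y + 1)) + x ≤ c x + c (y + 1) + (y + 1)) :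
    c (2 * x + 1 + (2 * y + 1)) + (2 * x + 1) ≤ c (2 * x + 1) + c (2 * y + 1) + (2 * y + 1) := by
  rw [show 2 * x + 1 + (2 * y + 1) = 2 * (x + 1 + y) by ring, hc.map_two_mul _ (by omega),
    hc.map_two_mul_add_one x hx, hc.map_two_mul_add_one y hy,
    show x + (y + 1) = x + 1 + y by ring] at *
  omega

theorem map_add_add_le (hc : MinCollessRecurrence c) {a b : ℕ} (hab : a ≤ b) :
    c (a + b) + a ≤ c a + c b + b := by
  induction b using Nat.strong_induction_on generalizing a with
  | _ b ih =>
  rcases Nat.lt_trichotomy a 1 with ha | rfl | ha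
  · obtain rfl : a = 0 := by omega
    rw [zero_add]
    omega
  · have := hc.map_succ_add_one_le (n := b) hab
    rw [hc.map_one, add_comm 1 b]
    omega
  rcases hab.eq_or_lt with rfl | hab
  · rw [← two_mul, hc.map_two_mul a (by omega)]
    omega
  obtain ⟨x, rfl | rfl⟩ := Nat.even_or_odd' a <;> obtain ⟨y, rfl | rfl⟩ := Nat.even_or_odd' b
  · exact hc.even_add_even_step (by omega) (by omega) (ih y (by omega) (by omega))
  · exact hc.even_add_odd_step (by omega) (by omega) (ih y (by omega) (by omega))
      (ih (y + 1) (by omega) (by omega))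
  · exact hc.odd_add_even_step (by omega) (by omega) (ih y (by omega) (by omega))
      (ih y (by omega) (by omega))
  · exact hc.odd_add_odd_step (by omega) (by omega) (ih y (by omega) (by omega))
      (ih (y + 1) (by omega) (by omega))

end MinCollessRecurrence

theorem minColless_superadditive (c : ℕ → ℕ) (h1 : c 1 = 0)
    (heven : ∀ n : ℕ, 1 ≤ n → c (2 * n) = 2 * c n)
    (hodd : ∀ n : ℕ, 1 ≤ n → c (2 * n + 1) = c (n + 1) + c n + 1) :
    ∀ m : ℕ, 1 ≤ m → ∀ s : ℕ, c (m + s) + c m + s ≥ c (2 * m + s) := by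
  intro m _ s
  have key := (MinCollessRecurrence.mk h1 heven hodd).map_add_add_le (Nat.le_add_right m s)
  rw [← add_assoc, ← two_mul] at key
  omega
end

section
/- Define c : ℕ → ℕ by c(1) = 0, c(2n) = 2·c(n), c(2n+1) = c(n+1) + c(n) + 1. Then for all s ∈ ℕ, c(1+s) + s > c(2+s) if and only if s > 1. -/
/-!
Strong induction along the recursion gives `c (n + 1) ≤ c n + log₂ n` for `n ≥ 1`: the increment
`c (2m + 1) - c (2m)` is `c (m + 1) - c m + 1` while `log₂` grows by one, and the increment
`c (2m + 2) - c (2m + 1)` is `c (m + 1) - c m - 1`. As `log₂ (s + 1) < s` for `s ≥ 2`, the strict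
inequality follows; for `s ∈ {0, 1}` it fails because `c 2 = 2 c 1` and `c 3 = c 2 + c 1 + 1`.
-/

theorem add_one_lt_two_pow {s : ℕ} (hs : 2 ≤ s) : s + 1 < 2 ^ s := by
  obtain ⟨t, rfl⟩ := Nat.exists_eq_add_of_le' hs
  have : t + 1 < 2 ^ (t + 1) := Nat.lt_two_pow_self
  rw [pow_succ]
  omega

theorem log_two_add_one_lt {s : ℕ} (hs : 2 ≤ s) : Nat.log 2 (s + 1) < s :=
  Nat.log_lt_of_lt_pow (Nat.succ_ne_zero s) (add_one_lt_two_pow hs)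

theorem succ_le_add_log_of_colless_recursion {c : ℕ → ℕ} (h1 : c 1 = 0)
    (heven : ∀ n : ℕ, 1 ≤ n → c (2 * n) = 2 * c n)
    (hodd : ∀ n : ℕ, 1 ≤ n → c (2 * n + 1) = c (n + 1) + c n + 1) :
    ∀ n : ℕ, 1 ≤ n → c (n + 1) ≤ c n + Nat.log 2 n := by
  intro n
  induction n using Nat.strong_induction_on with
  | _ n ih =>
    intro hn
    obtain ⟨m, rfl | rfl⟩ := Nat.even_or_odd' n
    · have hm : 1 ≤ m := by omega
      have hlog : Nat.log 2 (2 * m) = Nat.log 2 m + 1 := by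
        rw [mul_comm]; exact Nat.log_mul_base one_lt_two (by omega)
      have := ih m (by omega) hm
      rw [hodd m hm, heven m hm, hlog]
      omega
    · rcases Nat.eq_zero_or_pos m with rfl | hm
      · simp [heven 1 le_rfl, h1]
      · have hlog : Nat.log 2 m ≤ Nat.log 2 (2 * m + 1) := Nat.log_mono_right (by omega)
        have := ih m (by omega) hm
        rw [show 2 * m + 1 + 1 = 2 * (m + 1) by ring, heven (m + 1) (by omega), hodd m hm]
        omega

theorem minColless_strict_iff (c : ℕ → ℕ) (h1 : c 1 = 0)
    (heven : ∀ n : ℕ, 1 ≤ n → c (2 * n) = 2 * c n)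
    (hodd : ∀ n : ℕ, 1 ≤ n → c (2 * n + 1) = c (n + 1) + c n + 1) :
    ∀ s : ℕ, c (1 + s) + s > c (2 + s) ↔ 1 < s := by
  intro s
  constructor
  · contrapose!
    intro hs
    have h2 := heven 1 le_rfl
    have h3 := hodd 1 le_rfl
    interval_cases s <;> simp_all
  · intro hs
    have hstep := succ_le_add_log_of_colless_recursion h1 heven hodd (s + 1) (by omega)
    have hlog := log_two_add_one_lt hs
    rw [add_comm 1 s, show 2 + s = s + 1 + 1 by ring]
    omega
end

section
/- Define c : ℕ → ℕ by c(1) = 0, c(2n) = 2·c(n), c(2n+1) = c(n+1) + c(n) + 1. If m ≥ 1 is odd and s ≥ 2 is even, then c(m+s) + c(m) + s > c(2m+s). -/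
/-!
The recurrence makes `c n` the least value of `c a + c b + |a - b|` over `a + b = n`: by strong
induction on `a + b`, halve `a` and `b` and regroup the four halves into the two halves of `a + b`.
For odd `a < b` with `a + b = 2 * p` this gives `2 * c p ≤ c a + c b + (b - a)`, and the inequality
is in fact strict. Writing `a = 2k+1` and `b = 2l+1` and expanding once more, it suffices to apply
the non-strict bound to the pairs `(k, l)` and `(k+1, l+1)` when `k + l` is even (one of these two
pairs consists of odd numbers, so by induction its bound is strict), and to the pairs `(k, l+1)` and
`(k+1, l)` when `k + l` is odd (then the expansion leaves a slack of 2).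
-/

structure MinCollessRecurrence_s4 (c : ℕ → ℕ) : Prop where
  one : c 1 = 0
  two_mul : ∀ n, 1 ≤ n → c (2 * n) = 2 * c n
  two_mul_add_one : ∀ n, 1 ≤ n → c (2 * n + 1) = c (n + 1) + c n + 1

namespace MinCollessRecurrence_s4

variable {c : ℕ → ℕ}

theorem apply_succ_le (hc : MinCollessRecurrence_s4 c) {n : ℕ} (hn : 1 ≤ n) :
    c (n + 1) ≤ c n + (n - 1) := by
  induction n using Nat.strong_induction_on with
  | _ n ih =>
  obtain ⟨i, rfl | rfl⟩ := Nat.even_or_odd' n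
  · have hi : 1 ≤ i := by omega
    have := ih i (by omega) hi
    rw [hc.two_mul_add_one i hi, hc.two_mul i hi]
    omega
  · rcases Nat.eq_zero_or_pos i with rfl | hi
    · simp [hc.two_mul 1 le_rfl, hc.one]
    · have := ih i (by omega) hi
      rw [show 2 * i + 1 + 1 = 2 * (i + 1) by ring, hc.two_mul _ (by omega),
        hc.two_mul_add_one i hi]
      omega

theorem apply_add_le (hc : MinCollessRecurrence_s4 c) (a b : ℕ) :
    c (a + b) ≤ c a + c b + a.dist b := by
  induction hn : a + b using Nat.strong_induction_on generalizing a b with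
  | _ n ih =>
  subst hn
  wlog hpar : Even a ∨ Odd b generalizing a b
  · rw [add_comm a, add_comm (c a), Nat.dist_comm]
    exact this b a (fun x hx y z hyz => ih x (by omega) y z hyz) (by grind)
  unfold Nat.dist at *
  rcases Nat.eq_zero_or_pos a with rfl | ha₀
  · rw [zero_add]; omega
  rcases Nat.eq_zero_or_pos b with rfl | hb₀
  · rw [add_zero]; omega
  obtain rfl | ha : a = 1 ∨ 2 ≤ a := by omega
  · rw [add_comm, hc.one]
    have := hc.apply_succ_le hb₀
    omega
  obtain rfl | hb : b = 1 ∨ 2 ≤ b := by omega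
  · rw [hc.one]
    have := hc.apply_succ_le (by omega : 1 ≤ a)
    omega
  obtain ⟨i, rfl | rfl⟩ := Nat.even_or_odd' a <;> obtain ⟨j, rfl | rfl⟩ := Nat.even_or_odd' b
  case inr.inl => grind -- excluded by `hpar`
  · have := ih (i + j) (by omega) i j rfl
    rw [← mul_add, hc.two_mul _ (by omega), hc.two_mul i (by omega), hc.two_mul j (by omega)]
    omega
  · have := ih (i + j) (by omega) i j rfl
    have := ih (i + j + 1) (by omega) i (j + 1) (by ring)
    rw [show 2 * i + (2 * j + 1) = 2 * (i + j) + 1 by ring, hc.two_mul_add_one _ (by omega),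
      hc.two_mul i (by omega), hc.two_mul_add_one j (by omega)]
    omega
  · have := ih (i + j + 1) (by omega) i (j + 1) (by ring)
    have := ih (i + j + 1) (by omega) (i + 1) j (by ring)
    rw [show 2 * i + 1 + (2 * j + 1) = 2 * (i + j + 1) by ring, hc.two_mul _ (by omega),
      hc.two_mul_add_one i (by omega), hc.two_mul_add_one j (by omega)]
    omega

theorem two_mul_apply_le (hc : MinCollessRecurrence_s4 c) {a b p : ℕ} (ha : 1 ≤ a) (hab : a ≤ b)
    (h : a + b = 2 * p) : 2 * c p ≤ c a + c b + (b - a) := by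
  have := hc.apply_add_le a b
  rwa [h, hc.two_mul p (by omega), Nat.dist_eq_sub_of_le hab] at this

theorem two_mul_apply_lt (hc : MinCollessRecurrence_s4 c) {a b p : ℕ} (ha : Odd a) (hab : a < b)
    (h : a + b = 2 * p) : 2 * c p < c a + c b + (b - a) := by
  induction b using Nat.strong_induction_on generalizing a p with
  | _ b ih =>
  obtain ⟨k, rfl⟩ := ha
  obtain ⟨l, rfl⟩ : Odd b := ⟨p - k - 1, by omega⟩
  rw [hc.two_mul_add_one l (by omega)]
  rcases Nat.eq_zero_or_pos k with rfl | hk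
  · -- `a = 1` is not covered by the odd rule
    obtain rfl : p = l + 1 := by omega
    have := hc.apply_succ_le (n := l) (by omega)
    rw [mul_zero, zero_add, hc.one]
    omega
  rw [hc.two_mul_add_one k hk]
  obtain ⟨q, hq | hq⟩ := Nat.even_or_odd' (k + l)
  · obtain rfl : p = 2 * q + 1 := by omega
    rw [hc.two_mul_add_one q (by omega)]
    have := hc.two_mul_apply_le (a := k) (b := l) (p := q) hk (by omega) hq
    have := hc.two_mul_apply_le (a := k + 1) (b := l + 1) (p := q + 1) (by omega) (by omega)
      (by omega)
    rcases Nat.even_or_odd k with hk' | hk'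
    · have := ih (l + 1) (by omega) (a := k + 1) (p := q + 1) hk'.add_one (by omega) (by omega)
      omega
    · have := ih l (by omega) (a := k) (p := q) hk' (by omega) hq
      omega
  · obtain rfl : p = 2 * (q + 1) := by omega
    rw [hc.two_mul (q + 1) (by omega)]
    have := hc.two_mul_apply_le (a := k) (b := l + 1) (p := q + 1) hk (by omega) (by omega)
    have := hc.two_mul_apply_le (a := k + 1) (b := l) (p := q + 1) (by omega) (by omega)
      (by omega)
    omega

end MinCollessRecurrence_s4

theorem minColless_strict_of_odd_even (c : ℕ → ℕ) (h1 : c 1 = 0)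
    (heven : ∀ n : ℕ, 1 ≤ n → c (2 * n) = 2 * c n)
    (hodd : ∀ n : ℕ, 1 ≤ n → c (2 * n + 1) = c (n + 1) + c n + 1) :
    ∀ m s : ℕ, 1 ≤ m → Odd m → 2 ≤ s → Even s →
      c (m + s) + c m + s > c (2 * m + s) := by
  intro m s hm hm_odd hs hs_even
  obtain ⟨d, rfl⟩ := hs_even
  have hc : MinCollessRecurrence_s4 c := ⟨h1, heven, hodd⟩
  have := hc.two_mul_apply_lt (b := m + (d + d)) (p := m + d) hm_odd (by omega) (by ring)
  rw [show 2 * m + (d + d) = 2 * (m + d) by ring, heven _ (by omega)]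
  omega
end

section
/- Let n = ∑_{j=1}^{ℓ} 2^{m_j} with m_1 > m_2 > ⋯ > m_ℓ ≥ 0 be the binary expansion of n ≥ 1. Define c : ℕ → ℕ by c(1) = 0, c(2n) = 2·c(n), c(2n+1) = c(n+1) + c(n) + 1. Then c(n) = ∑_{j=2}^{ℓ} 2^{m_j} · (m_1 − m_j − 2(j−2)). -/
/-!
Write `popcount p` for the number of binary digits `1` of `p` (`p.bitIndices.length`). Induction
on `p` turns the recurrence into `c (p + 1) - c p = log₂ p + 2 - 2 popcount p`, which removes the
term `c (q + 1)` from the odd case: `c (2q + 1) = 2 c q + log₂ q + 3 - 2 popcount q`. Both `log₂`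
and `popcount` can be read off a binary expansion, and halving the expansion (lower every exponent
by one, and drop the term `2 ^ 0` when `n` is odd) transforms the right-hand side in the same way,
so the formula follows by induction on the leading exponent.
-/

open Finset

section BinaryExpansion

variable {ℓ : ℕ} {m m' : ℕ → ℕ}

theorem StrictAntiOn.injOn_range (hm : StrictAntiOn m (Set.Iio ℓ)) :
    Set.InjOn m (range ℓ) :=
  coe_range ℓ ▸ hm.injOn

theorem sum_range_two_pow_eq_sum_image (hm : StrictAntiOn m (Set.Iio ℓ)) :
    ∑ j ∈ range ℓ, 2 ^ m j = ∑ i ∈ (range ℓ).image m, 2 ^ i :=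
  (sum_image hm.injOn_range).symm

theorem one_le_sum_range_two_pow (hℓ : 1 ≤ ℓ) : 1 ≤ ∑ j ∈ range ℓ, 2 ^ m j :=
  Nat.one_le_iff_ne_zero.mpr <| (sum_pos (fun _ _ => by positivity)
    (nonempty_range_iff.mpr (by omega : ℓ ≠ 0))).ne'

theorem log_sum_range_two_pow (hℓ : 1 ≤ ℓ) (hm : StrictAntiOn m (Set.Iio ℓ)) :
    Nat.log 2 (∑ j ∈ range ℓ, 2 ^ m j) = m 0 := by
  have h0 : 0 ∈ range ℓ := mem_range.mpr hℓ
  apply Nat.log_eq_of_pow_le_of_lt_pow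
  · exact single_le_sum (f := fun j => 2 ^ m j) (fun _ _ => Nat.zero_le _) h0
  · rw [sum_range_two_pow_eq_sum_image hm]
    refine Nat.geomSum_lt le_rfl fun k hk => ?_
    obtain ⟨j, hj, rfl⟩ := mem_image.mp hk
    exact Nat.lt_succ_of_le (hm.antitoneOn (by simpa using h0) (by simpa using hj) (Nat.zero_le j))

theorem length_bitIndices_sum_range_two_pow (hm : StrictAntiOn m (Set.Iio ℓ)) :
    (∑ j ∈ range ℓ, 2 ^ m j).bitIndices.length = ℓ := by
  rw [← List.toFinset_card_of_nodup Nat.bitIndices_nodup, sum_range_two_pow_eq_sum_image hm,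
    toFinset_bitIndices_sum_two_pow, card_image_of_injOn hm.injOn_range, card_range]

theorem sum_range_two_pow_eq_two_mul (h : ∀ j < ℓ, 0 < m j) :
    ∑ j ∈ range ℓ, 2 ^ m j = 2 * ∑ j ∈ range ℓ, 2 ^ (m j - 1) := by
  rw [mul_sum]
  exact sum_congr rfl fun j hj => by rw [← pow_succ', Nat.sub_add_cancel (h j (mem_range.mp hj))]

theorem StrictAntiOn.sub_one (hm : StrictAntiOn m (Set.Iio ℓ)) (h : ∀ j < ℓ, 0 < m j) :
    StrictAntiOn (m · - 1) (Set.Iio ℓ) := fun i hi j hj hij => by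
  have := hm hi hj hij
  have := h j hj
  dsimp only
  omega

end BinaryExpansion

def collessSum (ℓ : ℕ) (m : ℕ → ℕ) : ℤ :=
  ∑ j ∈ Ico 1 ℓ, (2 : ℤ) ^ m j * ((m 0 : ℤ) - (m j : ℤ) - 2 * ((j : ℤ) - 1))

theorem collessSum_succ {ℓ : ℕ} (m : ℕ → ℕ) (hℓ : 1 ≤ ℓ) :
    collessSum (ℓ + 1) m =
      collessSum ℓ m + 2 ^ m ℓ * ((m 0 : ℤ) - m ℓ - 2 * ((ℓ : ℤ) - 1)) :=
  sum_Ico_succ_top hℓ _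

theorem collessSum_eq_two_mul {ℓ : ℕ} {m : ℕ → ℕ} (h : ∀ j < ℓ, 0 < m j) :
    collessSum ℓ m = 2 * collessSum ℓ (m · - 1) := by
  rw [collessSum, collessSum, mul_sum]
  refine sum_congr rfl fun j hj => ?_
  have hj := mem_Ico.mp hj
  have hpow : (2 : ℤ) ^ m j = 2 * 2 ^ (m j - 1) := by
    rw [← pow_succ', Nat.sub_add_cancel (h j hj.2)]
  rw [hpow, Nat.cast_sub (h j hj.2), Nat.cast_sub (h 0 (by omega))]
  ring

structure MinCollessRecurrence_s6 (c : ℕ → ℕ) : Prop where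
  one : c 1 = 0
  two_mul : ∀ n, 1 ≤ n → c (2 * n) = 2 * c n
  two_mul_add_one : ∀ n, 1 ≤ n → c (2 * n + 1) = c (n + 1) + c n + 1

namespace MinCollessRecurrence_s6

variable {c : ℕ → ℕ}

theorem apply_add_one (hc : MinCollessRecurrence_s6 c) {p : ℕ} (hp : 1 ≤ p) :
    (c (p + 1) : ℤ) = c p + Nat.log 2 p + 2 - 2 * p.bitIndices.length := by
  induction p using Nat.strong_induction_on with
  | _ p ih =>
  obtain ⟨q, rfl | rfl⟩ := Nat.even_or_odd' p
  · have hq : 1 ≤ q := by omega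
    have ihq := ih q (by omega) hq
    rw [hc.two_mul_add_one q hq, hc.two_mul q hq, Nat.log_of_one_lt_of_le one_lt_two (by omega),
      Nat.mul_div_cancel_left q two_pos, Nat.bitIndices_two_mul, List.length_map]
    push_cast
    linarith
  · rcases Nat.eq_zero_or_pos q with rfl | hq
    · simp [hc.two_mul 1 le_rfl, hc.one]
    have ihq := ih q (by omega) hq
    rw [show 2 * q + 1 + 1 = 2 * (q + 1) by ring, hc.two_mul (q + 1) (by omega),
      hc.two_mul_add_one q hq, Nat.log_of_one_lt_of_le one_lt_two (by omega),
      show (2 * q + 1) / 2 = q by omega, Nat.bitIndices_two_mul_add_one, List.length_cons,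
      List.length_map]
    push_cast
    linarith

theorem apply_two_mul_add_one (hc : MinCollessRecurrence_s6 c) {q : ℕ} (hq : 1 ≤ q) :
    (c (2 * q + 1) : ℤ) = 2 * c q + Nat.log 2 q + 3 - 2 * q.bitIndices.length := by
  rw [hc.two_mul_add_one q hq]
  push_cast
  linarith [hc.apply_add_one hq]

theorem apply_sum_range_two_pow (hc : MinCollessRecurrence_s6 c) {ℓ : ℕ} {m : ℕ → ℕ}
    (hℓ : 1 ≤ ℓ) (hm : StrictAntiOn m (Set.Iio ℓ)) :
    (c (∑ j ∈ range ℓ, 2 ^ m j) : ℤ) = collessSum ℓ m := by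
  induction h0 : m 0 generalizing ℓ m with
  | zero =>
    obtain rfl : ℓ = 1 := by
      by_contra hne
      have := hm (Set.mem_Iio.mpr hℓ) (Set.mem_Iio.mpr (by omega : 1 < ℓ)) one_pos
      omega
    simp [collessSum, h0, hc.one]
  | succ t ih =>
    have ih' {ℓ : ℕ} (hℓ : 1 ≤ ℓ) (hm : StrictAntiOn m (Set.Iio ℓ)) (hpos : ∀ j < ℓ, 0 < m j) :=
      ih hℓ (hm.sub_one hpos) (by omega)
    rcases Nat.eq_zero_or_pos (m (ℓ - 1)) with hlast | hlast
    · obtain ⟨L, rfl⟩ : ∃ L, ℓ = L + 1 := ⟨ℓ - 1, by omega⟩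
      rw [Nat.add_sub_cancel] at hlast
      have hL : 1 ≤ L := Nat.pos_of_ne_zero (by rintro rfl; omega)
      have hmL := hm.mono (Set.Iio_subset_Iio (Nat.le_succ L))
      have hpos : ∀ j < L, 0 < m j := fun j hj =>
        hlast ▸ hm (Set.mem_Iio.mpr (by omega)) (Set.mem_Iio.mpr (by omega)) hj
      rw [sum_range_succ, sum_range_two_pow_eq_two_mul hpos, hlast, pow_zero,
        hc.apply_two_mul_add_one (one_le_sum_range_two_pow hL), ih' hL hmL hpos,
        log_sum_range_two_pow hL (hmL.sub_one hpos),
        length_bitIndices_sum_range_two_pow (hmL.sub_one hpos), collessSum_succ m hL,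
        collessSum_eq_two_mul hpos, hlast, h0]
      push_cast
      ring
    · have hpos : ∀ j < ℓ, 0 < m j := fun j hj =>
        hlast.trans_le (hm.antitoneOn (Set.mem_Iio.mpr hj) (Set.mem_Iio.mpr (by omega))
          (by omega))
      rw [sum_range_two_pow_eq_two_mul hpos, hc.two_mul _ (one_le_sum_range_two_pow hℓ),
        collessSum_eq_two_mul hpos]
      push_cast
      rw [ih' hℓ hm hpos]

end MinCollessRecurrence_s6

theorem minColless_binary_expansion (c : ℕ → ℕ) (h1 : c 1 = 0)
    (heven : ∀ n : ℕ, 1 ≤ n → c (2 * n) = 2 * c n)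
    (hodd : ∀ n : ℕ, 1 ≤ n → c (2 * n + 1) = c (n + 1) + c n + 1)
    (n ℓ : ℕ) (hℓ : 1 ≤ ℓ) (m : ℕ → ℕ)
    (hmono : ∀ i j : ℕ, i < j → j < ℓ → m j < m i)
    (hbin : n = ∑ j ∈ Finset.range ℓ, 2 ^ m j) :
    (c n : ℤ) =
      ∑ j ∈ Finset.Ico 1 ℓ, (2 : ℤ) ^ m j * ((m 0 : ℤ) - (m j : ℤ) - 2 * ((j : ℤ) - 1)) := by
  subst hbin
  exact MinCollessRecurrence_s6.apply_sum_range_two_pow ⟨h1, heven, hodd⟩ hℓ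
    fun i _ j hj hij => hmono i j hij hj
end

section
/- Let s(x) = min over integers z of |x − z| denote the distance from a real x to the nearest integer. Define c : ℕ → ℕ by c(1) = 0, c(2n) = 2·c(n), c(2n+1) = c(n+1) + c(n) + 1, and let k_n = ⌈log₂ n⌉. Then for every n ≥ 1, c(n) = ∑_{j=1}^{k_n − 1} 2^j · s(n / 2^j). -/
/-!
For naturals, `2 ^ j * s (n / 2 ^ j)` is the distance `d(n, 2 ^ j)` from `n` to the nearest
multiple of `2 ^ j`, so the right-hand side is a natural-number sum `D(n)`, and it suffices to show
that `D` obeys the recurrence of `c`. Doubling `n` doubles every term and shifts the index by one.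
For `n = 2m + 1` the term `j = 1` is `1`, and for `j ≥ 2` the function `d(·, 2 ^ (j - 1))` is affine
between consecutive multiples of `2 ^ (j - 2)`, an interval containing both `m` and `m + 1`;
hence `d(2m + 1, 2 ^ j) = d(m, 2 ^ (j - 1)) + d(m + 1, 2 ^ (j - 1))`. The cutoffs `⌈log₂ m⌉` and
`⌈log₂ (m + 1)⌉` differ only when `m` is a power of two, and then the extra term `d(m, m)` is `0`.
-/

/-- The distance from a real number to the nearest integer. -/
noncomputable def nearestIntDist (x : ℝ) : ℝ := ⨅ z : ℤ, |x - (z : ℝ)|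

open Finset Nat

lemma nearestIntDist_eq_abs_sub_round (x : ℝ) : nearestIntDist x = |x - round x| :=
  le_antisymm (ciInf_le ⟨0, by rintro _ ⟨z, rfl⟩; positivity⟩ (round x)) (le_ciInf (round_le x))

def distToMultiple (n b : ℕ) : ℕ := min (n % b) (b - n % b)

lemma nearestIntDist_natCast_div (m n : ℕ) :
    nearestIntDist ((m : ℝ) / n) = (distToMultiple m n : ℝ) / n := by
  rw [nearestIntDist_eq_abs_sub_round, abs_sub_round_div_natCast_eq, distToMultiple]

lemma distToMultiple_of_dvd {n b : ℕ} (h : b ∣ n) : distToMultiple n b = 0 := by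
  simp [distToMultiple, Nat.mod_eq_zero_of_dvd h]

lemma distToMultiple_add_mul_self (n b q : ℕ) :
    distToMultiple (n + b * q) b = distToMultiple n b := by
  simp [distToMultiple]

lemma distToMultiple_mul_mul_left (a n b : ℕ) :
    distToMultiple (a * n) (a * b) = a * distToMultiple n b := by
  rw [distToMultiple, distToMultiple, Nat.mul_mod_mul_left, ← Nat.mul_sub, Nat.mul_min_mul_left]

lemma distToMultiple_two_mul_add_one_two (m : ℕ) : distToMultiple (2 * m + 1) 2 = 1 := by
  unfold distToMultiple
  omega

lemma distToMultiple_two_mul_add_one {b : ℕ} (hb : 0 < b) (m : ℕ) :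
    distToMultiple (2 * m + 1) (2 * (2 * b)) =
      distToMultiple m (2 * b) + distToMultiple (m + 1) (2 * b) := by
  obtain ⟨r, q, hr, rfl⟩ : ∃ r q, r < 2 * b ∧ m = r + 2 * b * q :=
    ⟨m % (2 * b), m / (2 * b), Nat.mod_lt _ (by omega), (Nat.mod_add_div _ _).symm⟩
  rw [show 2 * (r + 2 * b * q) + 1 = 2 * r + 1 + 2 * (2 * b) * q by ring,
    show r + 2 * b * q + 1 = r + 1 + 2 * b * q by ring]
  simp only [distToMultiple_add_mul_self]
  unfold distToMultiple
  rw [Nat.mod_eq_of_lt (by omega : 2 * r + 1 < 2 * (2 * b)), Nat.mod_eq_of_lt hr]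
  rcases (by omega : r + 1 < 2 * b ∨ r + 1 = 2 * b) with h | h
  · rw [Nat.mod_eq_of_lt h]
    omega
  · rw [h, Nat.mod_self]
    omega

def dyadicDistSum (n K : ℕ) : ℕ := ∑ j ∈ range K, distToMultiple n (2 ^ (j + 1))

lemma dyadicDistSum_two_mul (m K : ℕ) :
    dyadicDistSum (2 * m) K = 2 * dyadicDistSum m (K - 1) := by
  cases K with
  | zero => simp [dyadicDistSum]
  | succ K =>
    rw [dyadicDistSum, sum_range_succ', Nat.add_sub_cancel, dyadicDistSum, mul_sum,
      distToMultiple_of_dvd (by simp), add_zero]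
    simp only [pow_succ' 2 (_ + 1), distToMultiple_mul_mul_left]

lemma dyadicDistSum_two_mul_add_one (m K : ℕ) :
    dyadicDistSum (2 * m + 1) (K + 1) = dyadicDistSum m K + dyadicDistSum (m + 1) K + 1 := by
  rw [dyadicDistSum, sum_range_succ', zero_add, pow_one, distToMultiple_two_mul_add_one_two,
    dyadicDistSum, dyadicDistSum, ← sum_add_distrib]
  congr 1
  refine sum_congr rfl fun j _ => ?_
  rw [pow_succ', pow_succ', distToMultiple_two_mul_add_one (by positivity)]

lemma dyadicDistSum_succ_of_dvd {n K : ℕ} (h : 2 ^ (K + 1) ∣ n) :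
    dyadicDistSum n (K + 1) = dyadicDistSum n K := by
  rw [dyadicDistSum, sum_range_succ, distToMultiple_of_dvd h, add_zero, dyadicDistSum]

lemma dyadicDistSum_clog_succ (m : ℕ) :
    dyadicDistSum m (clog 2 (m + 1) - 1) = dyadicDistSum m (clog 2 m - 1) := by
  by_cases hpow : 2 ^ clog 2 m = m
  · have hclog : clog 2 (m + 1) = clog 2 m + 1 := by
      refine le_antisymm ((clog_le_iff_le_pow one_lt_two).2 ?_)
        ((clog_lt_clog_succ_iff one_lt_two).2 hpow)
      have := Nat.one_le_two_pow (n := clog 2 m)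
      rw [pow_succ]
      omega
    rw [hclog, Nat.add_sub_cancel]
    cases hk : clog 2 m with
    | zero => rfl
    | succ k => exact dyadicDistSum_succ_of_dvd (dvd_of_eq (hk ▸ hpow))
  · rw [(clog_eq_clog_succ_iff one_lt_two).2 hpow]

lemma clog_two_mul {m : ℕ} (hm : 1 ≤ m) : clog 2 (2 * m) = clog 2 m + 1 := by
  rw [clog_of_two_le one_lt_two (by omega), show (2 * m + 2 - 1) / 2 = m by omega]

lemma clog_two_mul_add_one {m : ℕ} (hm : 1 ≤ m) :
    clog 2 (2 * m + 1) = clog 2 (m + 1) + 1 := by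
  rw [clog_of_two_le one_lt_two (by omega), show (2 * m + 1 + 2 - 1) / 2 = m + 1 by omega]

lemma sum_Icc_pow_mul_nearestIntDist (n K : ℕ) :
    ∑ j ∈ Icc 1 K, (2 : ℝ) ^ j * nearestIntDist ((n : ℝ) / 2 ^ j) = dyadicDistSum n K := by
  rw [dyadicDistSum, Nat.cast_sum, range_eq_Ico, ← Ico_add_one_right_eq_Icc,
    ← sum_Ico_add' _ 0 K 1]
  refine sum_congr rfl fun j _ => ?_
  rw [show ((2 : ℝ) ^ (j + 1)) = ((2 ^ (j + 1) : ℕ) : ℝ) by push_cast; rfl,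
    nearestIntDist_natCast_div, mul_div_cancel₀ _ (by positivity)]

theorem minColless_nearestIntDist (c : ℕ → ℕ) (h1 : c 1 = 0)
    (heven : ∀ n : ℕ, 1 ≤ n → c (2 * n) = 2 * c n)
    (hodd : ∀ n : ℕ, 1 ≤ n → c (2 * n + 1) = c (n + 1) + c n + 1) :
    ∀ n : ℕ, 1 ≤ n →
      (c n : ℝ) =
        ∑ j ∈ Finset.Icc 1 (Nat.clog 2 n - 1),
          (2 : ℝ) ^ j * nearestIntDist ((n : ℝ) / 2 ^ j) := by
  intro n hn
  rw [sum_Icc_pow_mul_nearestIntDist, Nat.cast_inj]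
  induction n using Nat.strong_induction_on with
  | _ n ih =>
  obtain ⟨m, rfl | rfl⟩ := Nat.even_or_odd' n
  · have hm : 1 ≤ m := by omega
    rw [heven m hm, ih m (by omega) hm, clog_two_mul hm, Nat.add_sub_cancel, dyadicDistSum_two_mul]
  · rcases Nat.eq_zero_or_pos m with rfl | hm
    · simp [h1, dyadicDistSum]
    have hclog : 1 ≤ clog 2 (m + 1) := clog_pos one_lt_two (by omega)
    rw [hodd m hm, ih m (by omega) hm, ih (m + 1) (by omega) (by omega),
      clog_two_mul_add_one hm, Nat.add_sub_cancel, ← Nat.sub_add_cancel hclog,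
      dyadicDistSum_two_mul_add_one, Nat.sub_add_cancel hclog, dyadicDistSum_clog_succ]
    ring
end

section
/- Define c : ℕ → ℕ by c(1) = 0, c(2n) = 2·c(n), c(2n+1) = c(n+1) + c(n) + 1. Then for every n ≥ 1, c(n) < n/2; equivalently, 2·c(n) < n. -/
/-!
The bound is strengthened to `2 c(n) ≤ n - 2` for even `n`, which survives the recurrence:
in the odd step `n = 2m + 1` one of `m`, `m + 1` is even and contributes the extra slack
that absorbs the `+ 1`.
-/

section

variable {c : ℕ → ℕ}

theorem two_mul_add_two_le_add_mod_two (h1 : c 1 = 0)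
    (heven : ∀ n : ℕ, 1 ≤ n → c (2 * n) = 2 * c n)
    (hodd : ∀ n : ℕ, 1 ≤ n → c (2 * n + 1) = c (n + 1) + c n + 1) :
    ∀ n : ℕ, 1 ≤ n → 2 * c n + 2 ≤ n + n % 2 := by
  intro n
  induction n using Nat.strong_induction_on with
  | _ n ih =>
    intro hn
    obtain ⟨m, rfl | rfl⟩ := Nat.even_or_odd' n
    · have hm := ih m (by omega) (by omega)
      rw [heven m (by omega)]
      omega
    · rcases Nat.eq_zero_or_pos m with rfl | hm
      · simp [h1]
      · have hm₀ := ih m (by omega) hm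
        have hm₁ := ih (m + 1) (by omega) (by omega)
        rw [hodd m hm]
        omega

end

theorem minColless_lt_half (c : ℕ → ℕ) (h1 : c 1 = 0)
    (heven : ∀ n : ℕ, 1 ≤ n → c (2 * n) = 2 * c n)
    (hodd : ∀ n : ℕ, 1 ≤ n → c (2 * n + 1) = c (n + 1) + c n + 1) :
    ∀ n : ℕ, 1 ≤ n → 2 * c n < n := by
  intro n hn
  have := two_mul_add_two_le_add_mod_two h1 heven hodd n hn
  omega
end

section
/- Define c : ℕ → ℕ by c(1) = 0, c(2n) = 2·c(n), c(2n+1) = c(n+1) + c(n) + 1. Then for every n ≥ 1, 3·c(n) < 2^{⌈log₂ n⌉}. -/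
/-!
Write `P n` for `3 c(n) < 2^⌈log₂ n⌉`. Strong induction on `n` proves `P n ∧ P (2n + 1)`; the
second conjunct is needed because `P (m + 1)` and `P m` alone do not bound
`c (2m + 1) = c (m + 1) + c m + 1` sharply enough. Both `c (4m + 1)` and `c (4m + 3)` have the
form `a + 2b + 1` with `3a < 2^(k+1)` (from `P (2m + 1)`) and `3b < 2^k`, which forces
`3(a + 2b + 1) ≤ 2^(k+2)`; the inequality is strict because `3` does not divide a power of `2`.
-/

namespace Nat

theorem clog_mul_self_left {b m : ℕ} (hb : 1 < b) (hm : 1 ≤ m) :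
    clog b (b * m) = clog b m + 1 := by
  rw [clog_of_two_le hb (by nlinarith), show b * m + b - 1 = (b - 1) + b * m by omega,
    add_mul_div_left _ _ (by omega), Nat.div_eq_of_lt (by omega), zero_add]

theorem clog_mul_self_left_add_one {b m : ℕ} (hb : 1 < b) (hm : 1 ≤ m) :
    clog b (b * m + 1) = clog b (m + 1) + 1 := by
  rw [clog_of_two_le hb (by nlinarith), show b * m + 1 + b - 1 = b * (m + 1) by ring_nf; omega,
    mul_div_cancel_left₀ _ (by omega)]

end Nat

theorem three_mul_add_two_mul_add_one_lt_two_pow {a b k : ℕ} (ha : 3 * a < 2 ^ (k + 1))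
    (hb : 3 * b < 2 ^ k) : 3 * (a + 2 * b + 1) < 2 ^ (k + 2) := by
  have h3 : ¬ 3 ∣ 2 ^ (k + 2) := fun h => by
    have := Nat.prime_three.dvd_of_dvd_pow h
    omega
  simp only [pow_succ] at ha h3 ⊢
  omega

section

variable {c : ℕ → ℕ} (h1 : c 1 = 0) (heven : ∀ n : ℕ, 1 ≤ n → c (2 * n) = 2 * c n)
  (hodd : ∀ n : ℕ, 1 ≤ n → c (2 * n + 1) = c (n + 1) + c n + 1)
include h1 heven hodd

theorem three_mul_lt_two_pow_clog_and_two_mul_add_one (n : ℕ) (hn : 1 ≤ n) :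
    3 * c n < 2 ^ Nat.clog 2 n ∧ 3 * c (2 * n + 1) < 2 ^ Nat.clog 2 (2 * n + 1) := by
  induction n using Nat.strong_induction_on with
  | _ n ih =>
  obtain ⟨m, rfl | rfl⟩ := Nat.even_or_odd' n
  · have hm : 1 ≤ m := by omega
    obtain ⟨hcm, hcodd⟩ := ih m (by omega) hm
    rw [Nat.clog_mul_self_left_add_one one_lt_two hm] at hcodd
    have hclog : 2 ^ Nat.clog 2 m ≤ 2 ^ Nat.clog 2 (m + 1) :=
      Nat.pow_le_pow_right two_pos (Nat.clog_mono_right 2 m.le_succ)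
    have key := three_mul_add_two_mul_add_one_lt_two_pow hcodd (hcm.trans_le hclog)
    rw [Nat.clog_mul_self_left one_lt_two hm, Nat.clog_mul_self_left_add_one one_lt_two (by omega),
      Nat.clog_mul_self_left_add_one one_lt_two hm, hodd _ (by omega), heven m hm, pow_succ]
    constructor <;> omega
  · obtain rfl | hm := Nat.eq_zero_or_pos m
    · have hc3 : c 3 = 1 := by simp [hodd 1 le_rfl, heven 1 le_rfl, h1]
      have hclog3 : Nat.clog 2 3 = 2 := by decide
      simp [h1, hc3, hclog3]
    obtain ⟨hcm, hcodd⟩ := ih m (by omega) hm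
    have hcm' := (ih (m + 1) (by omega) (by omega)).1
    rw [Nat.clog_mul_self_left_add_one one_lt_two hm] at hcodd
    have key := three_mul_add_two_mul_add_one_lt_two_pow hcodd hcm'
    have hsucc : 2 * m + 1 + 1 = 2 * (m + 1) := by ring
    have hclog : Nat.clog 2 (2 * (2 * m + 1) + 1) = Nat.clog 2 (m + 1) + 2 := by
      rw [Nat.clog_mul_self_left_add_one one_lt_two (by omega), hsucc,
        Nat.clog_mul_self_left one_lt_two (by omega)]
    refine ⟨by rwa [Nat.clog_mul_self_left_add_one one_lt_two hm], ?_⟩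
    rw [hclog, hodd _ (by omega), hsucc, heven _ (by omega)]
    omega

end

theorem minColless_lt_third_pow_clog (c : ℕ → ℕ) (h1 : c 1 = 0)
    (heven : ∀ n : ℕ, 1 ≤ n → c (2 * n) = 2 * c n)
    (hodd : ∀ n : ℕ, 1 ≤ n → c (2 * n + 1) = c (n + 1) + c n + 1) :
    ∀ n : ℕ, 1 ≤ n → 3 * c n < 2 ^ Nat.clog 2 n := fun n hn =>
  (three_mul_lt_two_pow_clog_and_two_mul_add_one h1 heven hodd n hn).1
end

section
/- Define c : ℕ → ℕ by c(1) = 0, c(2n) = 2·c(n), c(2n+1) = c(n+1) + c(n) + 1. Then for every m ≥ 1 and every p with 1 ≤ p ≤ 2^m − 1, c(2^m + p) = c(2^{m+1} − p). -/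
/-!
Induction on `m`, proving the symmetry on the closed interval `0 ≤ p ≤ 2 ^ m`. Writing `p = 2q`
or `p = 2q + 1`, the recurrences express both sides at level `m + 1` through values at level `m`
that are mirror images of each other (`q` and `q + 1` trade places in the odd case), and the base
`m = 0` is `c 1 = c 2 = 0`.
-/

def IsSymmetricOnDyadic (c : ℕ → ℕ) (m : ℕ) : Prop :=
  ∀ p ≤ 2 ^ m, c (2 ^ m + p) = c (2 ^ (m + 1) - p)

section

variable {c : ℕ → ℕ}

theorem isSymmetricOnDyadic_zero (h1 : c 1 = 0)
    (heven : ∀ n : ℕ, 1 ≤ n → c (2 * n) = 2 * c n) :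
    IsSymmetricOnDyadic c 0 := by
  have h2 : c 2 = 0 := by simpa [h1] using heven 1 le_rfl
  intro p hp
  interval_cases p <;> simp [h1, h2]

theorem IsSymmetricOnDyadic.succ (heven : ∀ n : ℕ, 1 ≤ n → c (2 * n) = 2 * c n)
    (hodd : ∀ n : ℕ, 1 ≤ n → c (2 * n + 1) = c (n + 1) + c n + 1) {m : ℕ}
    (ih : IsSymmetricOnDyadic c m) : IsSymmetricOnDyadic c (m + 1) := by
  intro p hp
  have hpow : 2 ^ (m + 1) = 2 * 2 ^ m := pow_succ' 2 m
  have hpow' : 2 ^ (m + 1 + 1) = 2 * 2 ^ (m + 1) := pow_succ' 2 (m + 1)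
  have hpos : 0 < 2 ^ m := by positivity
  obtain ⟨q, rfl | rfl⟩ := Nat.even_or_odd' p
  · calc c (2 ^ (m + 1) + 2 * q)
        = c (2 * (2 ^ m + q)) := by congr 1; omega
      _ = c (2 * (2 ^ (m + 1) - q)) := by
        rw [heven (2 ^ m + q) (by omega), heven (2 ^ (m + 1) - q) (by omega), ih q (by omega)]
      _ = c (2 ^ (m + 1 + 1) - 2 * q) := by congr 1; omega
  · calc c (2 ^ (m + 1) + (2 * q + 1))
        = c (2 * (2 ^ m + q) + 1) := by congr 1; omega
      _ = c (2 ^ m + (q + 1)) + c (2 ^ m + q) + 1 := by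
        rw [hodd (2 ^ m + q) (by omega), add_assoc (2 ^ m) q 1]
      _ = c (2 ^ (m + 1) - (q + 1)) + c (2 ^ (m + 1) - q) + 1 := by
        rw [ih q (by omega), ih (q + 1) (by omega)]
      _ = c (2 * (2 ^ (m + 1) - (q + 1)) + 1) := by
        rw [hodd (2 ^ (m + 1) - (q + 1)) (by omega), add_comm (c _) (c _)]
        congr 3; omega
      _ = c (2 ^ (m + 1 + 1) - (2 * q + 1)) := by congr 1; omega

theorem isSymmetricOnDyadic (h1 : c 1 = 0) (heven : ∀ n : ℕ, 1 ≤ n → c (2 * n) = 2 * c n)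
    (hodd : ∀ n : ℕ, 1 ≤ n → c (2 * n + 1) = c (n + 1) + c n + 1) (m : ℕ) :
    IsSymmetricOnDyadic c m := by
  induction m with
  | zero => exact isSymmetricOnDyadic_zero h1 heven
  | succ m ih => exact ih.succ heven hodd

end

theorem minColless_symmetry (c : ℕ → ℕ) (h1 : c 1 = 0)
    (heven : ∀ n : ℕ, 1 ≤ n → c (2 * n) = 2 * c n)
    (hodd : ∀ n : ℕ, 1 ≤ n → c (2 * n + 1) = c (n + 1) + c n + 1) :
    ∀ m : ℕ, 1 ≤ m → ∀ p : ℕ, 1 ≤ p → p ≤ 2 ^ m - 1 →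
      c (2 ^ m + p) = c (2 ^ (m + 1) - p) := by
  intro m _ p _ hp
  exact isSymmetricOnDyadic h1 heven hodd m p (hp.trans (Nat.sub_le _ _))
end

section
/- Define c : ℕ → ℕ by c(1) = 0, c(2n) = 2·c(n), c(2n+1) = c(n+1) + c(n) + 1. Let s = 2^k·s₀ with k ≥ 1 and s₀ ≥ 1. Then for every m ≥ 1, the equality c(m+s) + c(m) + s = c(2m+s) holds if and only if m = 2^k·m₀ for some m₀ ≥ 1 with c(m₀+s₀) + c(m₀) + s₀ = c(2m₀+s₀). -/
/-!
Write `d(m, s) = c m + c (m + s) + s - c (2m + s)` for the defect of the split `(m + s, m)`.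
The recurrence expresses `d` at doubled (or doubled plus one) arguments as a sum of defects at
halved arguments, so induction on `m` shows `d ≥ 0`, and `d(m, 2u) > 0` for odd `m` and `u ≥ 1`;
the base case `m = 1` rests on the bound `2 (c (n + 1) - c n - c 1) ≤ n`. Hence `d(m, 2σ) = 0`
forces `m = 2m₀`, and then `d(2m₀, 2σ) = 2 d(m₀, σ)`; iterating `k` times gives the theorem.
-/

structure IsCollessRecurrence (c : ℕ → ℕ) : Prop where
  two_mul : ∀ n, 1 ≤ n → c (2 * n) = 2 * c n
  two_mul_add_one : ∀ n, 1 ≤ n → c (2 * n + 1) = c (n + 1) + c n + 1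

def collessDefect (c : ℕ → ℕ) (m s : ℕ) : ℤ := c m + c (m + s) + s - c (2 * m + s)

theorem collessDefect_eq_zero_iff (c : ℕ → ℕ) (m s : ℕ) :
    collessDefect c m s = 0 ↔ c (m + s) + c m + s = c (2 * m + s) := by
  unfold collessDefect
  omega

namespace IsCollessRecurrence

variable {c : ℕ → ℕ} {m n t u σ : ℕ}

theorem cast_two_mul (hc : IsCollessRecurrence c) (hn : 1 ≤ n) :
    (c (2 * n) : ℤ) = 2 * c n := by
  exact_mod_cast hc.two_mul n hn

theorem cast_two_mul_add_one (hc : IsCollessRecurrence c) (hn : 1 ≤ n) :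
    (c (2 * n + 1) : ℤ) = c (n + 1) + c n + 1 := by
  exact_mod_cast hc.two_mul_add_one n hn

theorem two_mul_increment_le (hc : IsCollessRecurrence c) (hn : 1 ≤ n) :
    2 * ((c (n + 1) : ℤ) - c n - c 1) ≤ n := by
  induction n using Nat.strong_induction_on with
  | _ n ih =>
    obtain ⟨t, rfl | rfl⟩ := Nat.even_or_odd' n
    · have ht : 1 ≤ t := by omega
      have := ih t (by omega) ht
      have := hc.cast_two_mul_add_one ht
      have := hc.cast_two_mul ht
      push_cast
      omega
    · rw [show 2 * t + 1 + 1 = 2 * (t + 1) by ring, hc.cast_two_mul (by omega)]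
      rcases Nat.eq_zero_or_pos t with rfl | ht
      · simp only [mul_zero, zero_add, Nat.cast_one]; omega
      · have := ih t (by omega) ht
        have := hc.cast_two_mul_add_one ht
        push_cast
        omega

theorem sub_one_le_two_mul_collessDefect_one (hc : IsCollessRecurrence c) (s : ℕ) :
    (s : ℤ) - 1 ≤ 2 * collessDefect c 1 s := by
  have := hc.two_mul_increment_le (n := s + 1) (by omega)
  unfold collessDefect
  rw [add_comm 1 s, show 2 * 1 + s = s + 1 + 1 by ring]
  push_cast at this ⊢
  omega

theorem collessDefect_even_even (hc : IsCollessRecurrence c) (ht : 1 ≤ t) :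
    collessDefect c (2 * t) (2 * σ) = 2 * collessDefect c t σ := by
  have h₁ := hc.cast_two_mul ht
  have h₂ := hc.cast_two_mul (n := t + σ) (by omega)
  have h₃ := hc.cast_two_mul (n := 2 * t + σ) (by omega)
  unfold collessDefect
  push_cast
  ring_nf at h₁ h₂ h₃ ⊢
  linarith

theorem collessDefect_even_odd (hc : IsCollessRecurrence c) (ht : 1 ≤ t) :
    collessDefect c (2 * t) (2 * σ + 1) = collessDefect c t σ + collessDefect c t (σ + 1) := by
  have h₁ := hc.cast_two_mul ht
  have h₂ := hc.cast_two_mul_add_one (n := t + σ) (by omega)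
  have h₃ := hc.cast_two_mul_add_one (n := 2 * t + σ) (by omega)
  unfold collessDefect
  push_cast
  ring_nf at h₁ h₂ h₃ ⊢
  linarith

theorem collessDefect_odd_odd (hc : IsCollessRecurrence c) (ht : 1 ≤ t) :
    collessDefect c (2 * t + 1) (2 * σ + 1) =
      collessDefect c t (σ + 1) + collessDefect c (t + 1) σ := by
  have h₁ := hc.cast_two_mul_add_one ht
  have h₂ := hc.cast_two_mul (n := t + σ + 1) (by omega)
  have h₃ := hc.cast_two_mul_add_one (n := 2 * t + σ + 1) (by omega)
  unfold collessDefect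
  push_cast
  ring_nf at h₁ h₂ h₃ ⊢
  linarith

theorem collessDefect_odd_four_mul (hc : IsCollessRecurrence c) (ht : 1 ≤ t) :
    collessDefect c (2 * t + 1) (2 * (2 * u)) =
      collessDefect c t (2 * u) + collessDefect c (t + 1) (2 * u) := by
  have h₁ := hc.cast_two_mul_add_one ht
  have h₂ := hc.cast_two_mul_add_one (n := t + 2 * u) (by omega)
  have h₃ := hc.cast_two_mul (n := 2 * (t + u) + 1) (by omega)
  have h₄ := hc.cast_two_mul_add_one (n := t + u) (by omega)
  have h₅ := hc.cast_two_mul (n := t + u) (by omega)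
  have h₆ := hc.cast_two_mul (n := t + u + 1) (by omega)
  unfold collessDefect
  push_cast
  ring_nf at h₁ h₂ h₃ h₄ h₅ h₆ ⊢
  linarith

theorem collessDefect_odd_four_mul_add_two (hc : IsCollessRecurrence c) (ht : 1 ≤ t) :
    collessDefect c (2 * t + 1) (2 * (2 * u + 1)) =
      collessDefect c t (2 * u + 2) + collessDefect c (t + 1) (2 * u) + 2 := by
  have h₁ := hc.cast_two_mul_add_one ht
  have h₂ := hc.cast_two_mul_add_one (n := t + 2 * u + 1) (by omega)
  have h₃ := hc.cast_two_mul (n := 2 * (t + u + 1)) (by omega)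
  have h₄ := hc.cast_two_mul (n := t + u + 1) (by omega)
  unfold collessDefect
  push_cast
  ring_nf at h₁ h₂ h₃ h₄ ⊢
  linarith

theorem collessDefect_nonneg (hc : IsCollessRecurrence c) (hm : 1 ≤ m) (s : ℕ) :
    0 ≤ collessDefect c m s := by
  induction m using Nat.strong_induction_on generalizing s with
  | _ m ih =>
    obtain ⟨t, rfl | rfl⟩ := Nat.even_or_odd' m
    · have ht : 1 ≤ t := by omega
      obtain ⟨σ, rfl | rfl⟩ := Nat.even_or_odd' s
      · rw [hc.collessDefect_even_even ht]
        linarith [ih t (by omega) ht σ]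
      · rw [hc.collessDefect_even_odd ht]
        linarith [ih t (by omega) ht σ, ih t (by omega) ht (σ + 1)]
    rcases Nat.eq_zero_or_pos t with rfl | ht
    · have := hc.sub_one_le_two_mul_collessDefect_one s
      rw [mul_zero, zero_add]
      omega
    have ih₀ := ih t (by omega) ht
    have ih₁ := ih (t + 1) (by omega) (by omega)
    obtain ⟨σ, rfl | rfl⟩ := Nat.even_or_odd' s
    · obtain ⟨u, rfl | rfl⟩ := Nat.even_or_odd' σ
      · rw [hc.collessDefect_odd_four_mul ht]
        linarith [ih₀ (2 * u), ih₁ (2 * u)]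
      · rw [hc.collessDefect_odd_four_mul_add_two ht]
        linarith [ih₀ (2 * u + 2), ih₁ (2 * u)]
    · rw [hc.collessDefect_odd_odd ht]
      linarith [ih₀ (σ + 1), ih₁ σ]

theorem collessDefect_odd_two_mul_pos (hc : IsCollessRecurrence c) (hm : Odd m) (hu : 1 ≤ u) :
    0 < collessDefect c m (2 * u) := by
  induction m using Nat.strong_induction_on generalizing u with
  | _ m ih =>
    obtain ⟨t, rfl⟩ := hm
    rcases Nat.eq_zero_or_pos t with rfl | ht
    · have := hc.sub_one_le_two_mul_collessDefect_one (2 * u)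
      push_cast at this
      rw [mul_zero, zero_add]
      omega
    have h₀ := hc.collessDefect_nonneg ht
    have h₁ := hc.collessDefect_nonneg (m := t + 1) (by omega)
    obtain ⟨v, rfl | rfl⟩ := Nat.even_or_odd' u
    · rw [hc.collessDefect_odd_four_mul ht]
      rcases Nat.even_or_odd t with ht_even | ht_odd
      · linarith [h₀ (2 * v), ih (t + 1) (by omega) ht_even.add_one (u := v) (by omega)]
      · linarith [h₁ (2 * v), ih t (by omega) ht_odd (u := v) (by omega)]
    · rw [hc.collessDefect_odd_four_mul_add_two ht]
      linarith [h₀ (2 * v + 2), h₁ (2 * v)]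

theorem collessDefect_two_mul_eq_zero_iff (hc : IsCollessRecurrence c) (hm : 1 ≤ m)
    (hσ : 1 ≤ σ) :
    collessDefect c m (2 * σ) = 0 ↔
      ∃ m₀, 1 ≤ m₀ ∧ m = 2 * m₀ ∧ collessDefect c m₀ σ = 0 := by
  constructor
  · intro h
    obtain ⟨t, rfl | rfl⟩ := Nat.even_or_odd' m
    · refine ⟨t, by omega, rfl, ?_⟩
      rw [hc.collessDefect_even_even (by omega)] at h
      linarith
    · exact absurd h (hc.collessDefect_odd_two_mul_pos ⟨t, rfl⟩ hσ).ne'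
  · rintro ⟨m₀, hm₀, rfl, h⟩
    rw [hc.collessDefect_even_even hm₀, h, mul_zero]

theorem collessDefect_two_pow_mul_eq_zero_iff (hc : IsCollessRecurrence c) (k : ℕ)
    (hm : 1 ≤ m) (hσ : 1 ≤ σ) :
    collessDefect c m (2 ^ k * σ) = 0 ↔
      ∃ m₀, 1 ≤ m₀ ∧ m = 2 ^ k * m₀ ∧ collessDefect c m₀ σ = 0 := by
  induction k generalizing m with
  | zero =>
    simp only [pow_zero, one_mul]
    exact ⟨fun h ↦ ⟨m, hm, rfl, h⟩, fun ⟨_, _, hm₀, h⟩ ↦ hm₀ ▸ h⟩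
  | succ k ih =>
    have hσk : 1 ≤ 2 ^ k * σ := Nat.mul_pos (Nat.two_pow_pos k) hσ
    rw [show 2 ^ (k + 1) * σ = 2 * (2 ^ k * σ) by ring,
      hc.collessDefect_two_mul_eq_zero_iff hm hσk]
    constructor
    · rintro ⟨m₁, hm₁, rfl, h⟩
      obtain ⟨m₀, hm₀, rfl, h₀⟩ := (ih hm₁).mp h
      exact ⟨m₀, hm₀, by ring, h₀⟩
    · rintro ⟨m₀, hm₀, rfl, h₀⟩
      have hm₁ : 1 ≤ 2 ^ k * m₀ := Nat.mul_pos (Nat.two_pow_pos k) hm₀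
      exact ⟨2 ^ k * m₀, hm₁, by ring, (ih hm₁).mpr ⟨m₀, hm₀, rfl, h₀⟩⟩

end IsCollessRecurrence

theorem minColless_eq_even_shift_general (c : ℕ → ℕ)
    (heven : ∀ n : ℕ, 1 ≤ n → c (2 * n) = 2 * c n)
    (hodd : ∀ n : ℕ, 1 ≤ n → c (2 * n + 1) = c (n + 1) + c n + 1)
    (s s₀ k : ℕ) (hs₀ : 1 ≤ s₀) (hs : s = 2 ^ k * s₀) :
    ∀ m : ℕ, 1 ≤ m →
      (c (m + s) + c m + s = c (2 * m + s) ↔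
        ∃ m₀ : ℕ, 1 ≤ m₀ ∧ m = 2 ^ k * m₀ ∧
          c (m₀ + s₀) + c m₀ + s₀ = c (2 * m₀ + s₀)) := by
  intro m hm
  simp only [← collessDefect_eq_zero_iff, hs]
  exact IsCollessRecurrence.collessDefect_two_pow_mul_eq_zero_iff ⟨heven, hodd⟩ k hm hs₀

theorem minColless_eq_even_shift (c : ℕ → ℕ) (h1 : c 1 = 0)
    (heven : ∀ n : ℕ, 1 ≤ n → c (2 * n) = 2 * c n)
    (hodd : ∀ n : ℕ, 1 ≤ n → c (2 * n + 1) = c (n + 1) + c n + 1)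
    (s s₀ k : ℕ) (hk : 1 ≤ k) (hs₀ : 1 ≤ s₀) (hs : s = 2 ^ k * s₀) :
    ∀ m : ℕ, 1 ≤ m →
      (c (m + s) + c m + s = c (2 * m + s) ↔
        ∃ m₀ : ℕ, 1 ≤ m₀ ∧ m = 2 ^ k * m₀ ∧
          c (m₀ + s₀) + c m₀ + s₀ = c (2 * m₀ + s₀)) :=
  minColless_eq_even_shift_general c heven hodd s s₀ k hs₀ hs
end

section
/- Define c : ℕ → ℕ by c(1) = 0, c(2n) = 2·c(n), c(2n+1) = c(n+1) + c(n) + 1. Let n ≥ 2, write n = 2^m + p with m = ⌊log₂ n⌋ and 0 ≤ p < 2^m, and let n_a ≥ n_b ≥ 1 with n_a + n_b = n satisfy c(n_a) + c(n_b) + n_a − n_b = c(n). Then n_a − n_b ≤ min{p, 2^m − p}. -/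
/-!
`greedyBalance n = min (n - 2^m) (2^(m+1) - n)` is the distance from `n` to the nearest power of
two. By strong induction on `n`, every split `n = a + b` with `a ≥ b ≥ 1` costs at least `c n`, and
strictly more once `a - b > greedyBalance n`. Halving `a` and `b` according to their parities writes
the cost of a split of `n` as a sum of costs of splits of `⌊n/2⌋` and `⌈n/2⌉`, plus 0, 1 or 2.
The balance doubles from `s` to `2s`, while at `2s + 1` it is odd and at least
`2 greedyBalance s - 1` and `2 greedyBalance (s + 1) - 1`; this carries the strict inequality from one
level to the next. Splits with `b = 1` are settled by `c n ≤ n - 2`.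
-/

structure CollessRecurrence (c : ℕ → ℕ) : Prop where
  one : c 1 = 0
  two_mul : ∀ n : ℕ, 1 ≤ n → c (2 * n) = 2 * c n
  two_mul_add_one : ∀ n : ℕ, 1 ≤ n → c (2 * n + 1) = c (n + 1) + c n + 1

def greedyBalance (n : ℕ) : ℕ := min (n - 2 ^ Nat.log 2 n) (2 ^ (Nat.log 2 n + 1) - n)

/-- The Colless index of a tree whose root subtrees are minimal with `a ≥ b` leaves. -/
def splitCost (c : ℕ → ℕ) (a b : ℕ) : ℕ := c a + c b + (a - b)

def SplitBound (c : ℕ → ℕ) (n a b : ℕ) : Prop :=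
  c n ≤ splitCost c a b ∧ (greedyBalance n < a - b → c n < splitCost c a b)

def SplitsBounded (c : ℕ → ℕ) (n : ℕ) : Prop :=
  ∀ a b, 1 ≤ b → b ≤ a → a + b = n → SplitBound c n a b

theorem greedyBalance_of_pow_le_of_le_pow {n k : ℕ} (hk : 2 ^ k ≤ n) (hn : n ≤ 2 ^ (k + 1)) :
    greedyBalance n = min (n - 2 ^ k) (2 ^ (k + 1) - n) := by
  rcases hn.lt_or_eq with hn | rfl
  · rw [greedyBalance, Nat.log_eq_of_pow_le_of_lt_pow hk hn]
  · simp [greedyBalance, Nat.log_pow]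

theorem greedyBalance_two_mul (s : ℕ) : greedyBalance (2 * s) = 2 * greedyBalance s := by
  rcases eq_or_ne s 0 with rfl | hs
  · simp [greedyBalance]
  have hlo := Nat.pow_log_le_self 2 hs
  have hhi := Nat.lt_pow_succ_log_self one_lt_two s
  rw [greedyBalance_of_pow_le_of_le_pow hlo hhi.le,
    greedyBalance_of_pow_le_of_le_pow (k := Nat.log 2 s + 1) (by rw [pow_succ]; omega)
      (by rw [pow_succ, pow_succ 2 (Nat.log 2 s)]; omega)]
  simp only [pow_succ] at *
  omega

theorem two_mul_greedyBalance_le (s : ℕ) :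
    2 * greedyBalance s ≤ greedyBalance (2 * s + 1) + 1 := by
  rcases eq_or_ne s 0 with rfl | hs
  · simp [greedyBalance]
  have hlo := Nat.pow_log_le_self 2 hs
  have hhi := Nat.lt_pow_succ_log_self one_lt_two s
  rw [greedyBalance_of_pow_le_of_le_pow hlo hhi.le,
    greedyBalance_of_pow_le_of_le_pow (k := Nat.log 2 s + 1) (by rw [pow_succ]; omega)
      (by rw [pow_succ, pow_succ 2 (Nat.log 2 s)]; omega)]
  simp only [pow_succ] at *
  omega

theorem two_mul_greedyBalance_succ_le (s : ℕ) :
    2 * greedyBalance (s + 1) ≤ greedyBalance (2 * s + 1) + 1 := by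
  rcases eq_or_ne s 0 with rfl | hs
  · simp [greedyBalance]
  have hlo := Nat.pow_log_le_self 2 hs
  have hhi := Nat.lt_pow_succ_log_self one_lt_two s
  rw [greedyBalance_of_pow_le_of_le_pow (n := s + 1) (by omega) hhi,
    greedyBalance_of_pow_le_of_le_pow (k := Nat.log 2 s + 1) (by rw [pow_succ]; omega)
      (by rw [pow_succ, pow_succ 2 (Nat.log 2 s)]; omega)]
  simp only [pow_succ] at *
  omega

theorem odd_greedyBalance_two_mul_add_one {s : ℕ} (hs : s ≠ 0) :
    Odd (greedyBalance (2 * s + 1)) := by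
  have hlo := Nat.pow_log_le_self 2 hs
  have hhi := Nat.lt_pow_succ_log_self one_lt_two s
  rw [greedyBalance_of_pow_le_of_le_pow (k := Nat.log 2 s + 1) (by rw [pow_succ]; omega)
      (by rw [pow_succ, pow_succ 2 (Nat.log 2 s)]; omega), Nat.odd_iff]
  simp only [pow_succ] at *
  omega

namespace CollessRecurrence

variable {c : ℕ → ℕ} (hc : CollessRecurrence c)
include hc

theorem add_two_le {n : ℕ} (hn : 2 ≤ n) : c n + 2 ≤ n := by
  induction n using Nat.strong_induction_on with
  | _ n ih =>
    obtain ⟨s, rfl | rfl⟩ := Nat.even_or_odd' n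
    · rcases (show s = 1 ∨ 2 ≤ s by omega) with rfl | hs
      · simp [hc.two_mul 1 le_rfl, hc.one]
      · have := ih s (by omega) hs
        rw [hc.two_mul s (by omega)]
        omega
    · rcases (show s = 1 ∨ 2 ≤ s by omega) with rfl | hs
      · simp [hc.two_mul_add_one 1 le_rfl, hc.two_mul 1 le_rfl, hc.one]
      · have := ih s (by omega) hs
        have := ih (s + 1) (by omega) (by omega)
        rw [hc.two_mul_add_one s (by omega)]
        omega

variable {t u : ℕ}

theorem splitCost_two_mul_two_mul (ht : 1 ≤ t) (hu : 1 ≤ u) :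
    splitCost c (2 * t) (2 * u) = 2 * splitCost c t u := by
  simp only [splitCost, hc.two_mul t ht, hc.two_mul u hu]
  omega

theorem splitCost_two_mul_add_one_two_mul_add_one (hu : 1 ≤ u) (hut : u < t) :
    splitCost c (2 * t + 1) (2 * u + 1) = splitCost c (t + 1) u + splitCost c t (u + 1) + 2 := by
  simp only [splitCost, hc.two_mul_add_one t (by omega), hc.two_mul_add_one u hu]
  omega

theorem splitCost_two_mul_two_mul_add_one (hu : 1 ≤ u) (hut : u < t) :
    splitCost c (2 * t) (2 * u + 1) = splitCost c t u + splitCost c t (u + 1) + 1 := by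
  simp only [splitCost, hc.two_mul t (by omega), hc.two_mul_add_one u hu]
  omega

theorem splitCost_two_mul_add_one_two_mul (hu : 1 ≤ u) (hut : u ≤ t) :
    splitCost c (2 * t + 1) (2 * u) = splitCost c t u + splitCost c (t + 1) u + 1 := by
  simp only [splitCost, hc.two_mul_add_one t (by omega), hc.two_mul u hu]
  omega

theorem splitsBounded_two_mul {s : ℕ} (hs : 1 ≤ s) (ih : SplitsBounded c s) :
    SplitsBounded c (2 * s) := by
  intro a b hb hba hab
  rw [SplitBound, hc.two_mul s hs]
  obtain ⟨t, rfl | rfl⟩ := Nat.even_or_odd' a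
  · obtain ⟨u, rfl⟩ : ∃ u, b = 2 * u := ⟨b / 2, by omega⟩
    have hbal := greedyBalance_two_mul s
    obtain ⟨hle, hlt⟩ := ih t u (by omega) (by omega) (by omega)
    rw [hc.splitCost_two_mul_two_mul (by omega) (by omega)]
    exact ⟨by omega, fun h => by have := hlt (by omega); omega⟩
  obtain ⟨u, rfl⟩ : ∃ u, b = 2 * u + 1 := ⟨b / 2, by omega⟩
  rcases (show u = t ∨ (u = 0 ∧ 1 ≤ t) ∨ (1 ≤ u ∧ u < t) by omega) with
    rfl | ⟨rfl, ht⟩ | ⟨hu, hut⟩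
  · obtain rfl : s = 2 * u + 1 := by omega
    simp only [splitCost, Nat.sub_self]
    omega
  · obtain rfl : s = t + 1 := by omega
    have := hc.add_two_le (n := t + 1) (by omega)
    simp only [splitCost, hc.two_mul_add_one t (by omega), hc.one]
    omega
  · have h₁ := (ih (t + 1) u hu (by omega) (by omega)).1
    have h₂ := (ih t (u + 1) (by omega) (by omega) (by omega)).1
    rw [hc.splitCost_two_mul_add_one_two_mul_add_one hu hut]
    omega

theorem splitsBounded_two_mul_add_one {s : ℕ} (hs : 1 ≤ s) (ih : SplitsBounded c s)
    (ih' : SplitsBounded c (s + 1)) : SplitsBounded c (2 * s + 1) := by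
  intro a b hb hba hab
  obtain ⟨r, hr⟩ := odd_greedyBalance_two_mul_add_one (s := s) (by omega)
  have hbal := two_mul_greedyBalance_le s
  have hbal' := two_mul_greedyBalance_succ_le s
  rw [SplitBound, hc.two_mul_add_one s hs]
  obtain ⟨t, rfl | rfl⟩ := Nat.even_or_odd' a
  · obtain ⟨u, rfl⟩ : ∃ u, b = 2 * u + 1 := ⟨b / 2, by omega⟩
    rcases Nat.eq_zero_or_pos u with rfl | hu
    · obtain rfl : t = s := by omega
      have := hc.add_two_le (n := t + 1) (by omega)
      simp only [splitCost, hc.two_mul t hs, hc.one]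
      omega
    obtain ⟨h₁, h₁'⟩ := ih t u hu (by omega) (by omega)
    have h₂ := (ih' t (u + 1) (by omega) (by omega) (by omega)).1
    rw [hc.splitCost_two_mul_two_mul_add_one hu (by omega)]
    exact ⟨by omega, fun h => by have := h₁' (by omega); omega⟩
  · obtain ⟨u, rfl⟩ : ∃ u, b = 2 * u := ⟨b / 2, by omega⟩
    have h₁ := (ih t u (by omega) (by omega) (by omega)).1
    obtain ⟨h₂, h₂'⟩ := ih' (t + 1) u (by omega) (by omega) (by omega)
    rw [hc.splitCost_two_mul_add_one_two_mul (by omega) (by omega)]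
    exact ⟨by omega, fun h => by have := h₂' (by omega); omega⟩

theorem splitsBounded (n : ℕ) : SplitsBounded c n := by
  induction n using Nat.strong_induction_on with
  | _ n ih =>
    obtain ⟨s, rfl | rfl⟩ := Nat.even_or_odd' n
    · rcases Nat.eq_zero_or_pos s with rfl | hs
      · intro a b hb hba hab
        omega
      exact hc.splitsBounded_two_mul hs (ih s (by omega))
    · rcases Nat.eq_zero_or_pos s with rfl | hs
      · intro a b hb hba hab
        omega
      exact hc.splitsBounded_two_mul_add_one hs (ih s (by omega)) (ih (s + 1) (by omega))

end CollessRecurrence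

theorem minColless_root_balance_le_general (c : ℕ → ℕ) (h1 : c 1 = 0)
    (heven : ∀ n : ℕ, 1 ≤ n → c (2 * n) = 2 * c n)
    (hodd : ∀ n : ℕ, 1 ≤ n → c (2 * n + 1) = c (n + 1) + c n + 1)
    (n m p : ℕ) (hm : m = Nat.log 2 n)
    (hnp : n = 2 ^ m + p)
    (na nb : ℕ) (hba : nb ≤ na) (hb1 : 1 ≤ nb) (hab : na + nb = n)
    (hmin : c na + c nb + (na - nb) = c n) :
    na - nb ≤ min p (2 ^ m - p) := by
  have hbal : greedyBalance n = min p (2 ^ m - p) := by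
    rw [greedyBalance, ← hm, pow_succ]
    omega
  by_contra! h
  have := (CollessRecurrence.splitsBounded ⟨h1, heven, hodd⟩ n na nb hb1 hba hab).2 (by omega)
  rw [splitCost] at this
  omega

theorem minColless_root_balance_le (c : ℕ → ℕ) (h1 : c 1 = 0)
    (heven : ∀ n : ℕ, 1 ≤ n → c (2 * n) = 2 * c n)
    (hodd : ∀ n : ℕ, 1 ≤ n → c (2 * n + 1) = c (n + 1) + c n + 1)
    (n m p : ℕ) (hn : 2 ≤ n) (hm : m = Nat.log 2 n)
    (hnp : n = 2 ^ m + p) (hp : p < 2 ^ m)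
    (na nb : ℕ) (hba : nb ≤ na) (hb1 : 1 ≤ nb) (hab : na + nb = n)
    (hmin : c na + c nb + (na - nb) = c n) :
    na - nb ≤ min p (2 ^ m - p) :=
  minColless_root_balance_le_general c h1 heven hodd n m p hm hnp na nb hba hb1 hab hmin
end
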